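/- arXiv:1908.00226 — 3 statements merged into one kernel-verified Lean document; each statement's English description precedes it below -/
import Mathlib

section
/- The function n_p(ρ) = (-κ(ρ) + √(κ(ρ)(κ(ρ) + nλρ)))/(λρ), where κ(ρ) = λρ + σ², is strictly decreasing in ρ on (0, ∞). -/
/-!
Rationalising the numerator turns `n_p` into `n / (√(1 + nλρ/κ(ρ)) + 1)`. Since
`λρ/(λρ + σ²)` increases with `ρ`, the denominator increases and `n_p` decreases.
-/

open Set

lemma neg_add_sqrt_mul_div_eq {κ n x : ℝ} (hκ : 0 < κ) (hx : x ≠ 0) (h : 0 ≤ κ + n * x) :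
    (-κ + √(κ * (κ + n * x))) / x = n / (√(1 + n * x / κ) + 1) := by
  set s := √(1 + n * x / κ)
  have hs : s ^ 2 = 1 + n * x / κ := Real.sq_sqrt (by field_simp; linarith)
  have hsqrt : √(κ * (κ + n * x)) = κ * s := by
    rw [show κ * (κ + n * x) = κ ^ 2 * (1 + n * x / κ) by field_simp,
      Real.sqrt_mul (sq_nonneg κ), Real.sqrt_sq hκ.le]
  have hs1 : 0 < s + 1 := by positivity
  rw [hsqrt, div_eq_div_iff hx hs1.ne']
  have hnx : n * x = κ * (s ^ 2 - 1) := by rw [hs]; field_simp; ring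
  linear_combination -hnx

lemma strictMonoOn_div_add {c : ℝ} (hc : 0 < c) :
    StrictMonoOn (fun x => x / (x + c)) (Ioi (-c)) := by
  intro a (ha : -c < a) b (hb : -c < b) hab
  rw [div_lt_div_iff₀ (by linarith) (by linarith)]
  nlinarith

lemma strictAntiOn_div_sqrt_one_add_mul_div_add {c n : ℝ} (hc : 0 < c) (hn : 0 < n) :
    StrictAntiOn (fun x => n / (√(1 + n * (x / (x + c))) + 1)) (Ioi 0) := by
  intro a (ha : 0 < a) b (hb : 0 < b) hab
  have hab' := strictMonoOn_div_add hc (a := a) (b := b) (mem_Ioi.2 (by linarith))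
    (mem_Ioi.2 (by linarith)) hab
  apply div_lt_div_of_pos_left hn (by positivity)
  gcongr

/-- `n_p(ρ) = (-κ(ρ) + √(κ(ρ)(κ(ρ) + nλρ)))/(λρ)`, `κ(ρ) = λρ + σ²`, is strictly decreasing
in `ρ` on `(0, ∞)`. -/
theorem stmt_8 (lam σ2 n : ℝ) (hlam : 0 < lam) (hσ : 0 < σ2) (hn : 0 < n) :
    StrictAntiOn (fun ρ : ℝ =>
      (-(lam * ρ + σ2) + Real.sqrt ((lam * ρ + σ2) * ((lam * ρ + σ2) + n * lam * ρ)))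
        / (lam * ρ)) (Set.Ioi 0) := by
  have hscale : StrictMonoOn (fun ρ => lam * ρ) (Ioi 0) :=
    (strictMono_mul_left_of_pos hlam).strictMonoOn _
  refine ((strictAntiOn_div_sqrt_one_add_mul_div_add hσ hn).comp_strictMonoOn hscale
    fun ρ hρ => mul_pos hlam hρ).congr fun ρ (hρ : 0 < ρ) => ?_
  have hx : 0 < lam * ρ := mul_pos hlam hρ
  rw [Function.comp_apply, mul_assoc n, neg_add_sqrt_mul_div_eq (by positivity) hx.ne'
    (by positivity), ← mul_div_assoc]
end

section
/- The derivative of n_p(ρ) = (-κ + √(κ(κ + nλρ)))/(λρ) with κ = λρ + σ² with respect to ρ equals -σ²[2κ + nρλ - 2√(κ(κ + nρλ))] / (2λρ²√(κ(κ + nρλ))), and this is strictly negative for all ρ > 0. -/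
/-!
Write `κ = λρ + σ²` and `s = √(κ(κ + nλρ))`. Differentiating the quotient and eliminating `s²`
gives the closed form, whose sign is that of `2s - (2κ + nλρ)`; this is negative by the strict
AM–GM inequality `2√(ab) < a + b` for the distinct numbers `a = κ` and `b = κ + nλρ`.
-/

open Real

lemma Real.two_mul_sqrt_mul_lt_add {a b : ℝ} (ha : 0 ≤ a) (hb : 0 ≤ b) (hab : a ≠ b) :
    2 * √(a * b) < a + b := by
  have hsqrt : √a ≠ √b := fun h => hab ((sqrt_inj ha hb).mp h)
  have hpos : 0 < (√a - √b) ^ 2 := by positivity [sub_ne_zero.mpr hsqrt]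
  rw [sqrt_mul ha]
  nlinarith [sq_sqrt ha, sq_sqrt hb]

noncomputable def np (lam σ2 n ρ : ℝ) : ℝ :=
  (-(lam * ρ + σ2) + √((lam * ρ + σ2) * ((lam * ρ + σ2) + n * lam * ρ))) / (lam * ρ)

lemma hasDerivAt_np {lam σ2 n ρ : ℝ} (hlam : lam ≠ 0) (hρ : ρ ≠ 0)
    (hq : 0 < (lam * ρ + σ2) * ((lam * ρ + σ2) + n * lam * ρ)) :
    HasDerivAt (np lam σ2 n)
      (-(σ2 * (2 * (lam * ρ + σ2) + n * lam * ρ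
          - 2 * √((lam * ρ + σ2) * ((lam * ρ + σ2) + n * lam * ρ))))
        / (2 * lam * ρ ^ 2 * √((lam * ρ + σ2) * ((lam * ρ + σ2) + n * lam * ρ)))) ρ := by
  set s := √((lam * ρ + σ2) * ((lam * ρ + σ2) + n * lam * ρ)) with hs_def
  have hs : 0 < s := sqrt_pos.mpr hq
  have hs2 : s ^ 2 = (lam * ρ + σ2) * ((lam * ρ + σ2) + n * lam * ρ) := sq_sqrt hq.le
  have hκ : HasDerivAt (fun x => lam * x + σ2) lam ρ := (hasDerivAt_const_mul lam).add_const σ2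
  have hm : HasDerivAt (fun x => n * lam * x) (n * lam) ρ := hasDerivAt_const_mul (n * lam)
  have hnum : HasDerivAt
      (fun x => -(lam * x + σ2) + √((lam * x + σ2) * ((lam * x + σ2) + n * lam * x)))
      (-lam + (lam * ((lam * ρ + σ2) + n * lam * ρ) + (lam * ρ + σ2) * (lam + n * lam)) / (2 * s))
      ρ :=
    hκ.neg.add ((hκ.mul (hκ.add hm)).sqrt hq.ne')
  refine (hnum.div (hasDerivAt_const_mul lam) (mul_ne_zero hlam hρ)).congr_deriv ?_
  rw [← hs_def]
  field_simp
  linear_combination (-2) * hs2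

/-- The derivative of `n_p(ρ) = (-κ + √(κ(κ + nλρ)))/(λρ)`, `κ = λρ + σ²`, equals
`-σ²[2κ + nρλ - 2√(κ(κ + nρλ))]/(2λρ²√(κ(κ + nρλ)))` and is strictly negative for `ρ > 0`. -/
theorem stmt_10 (lam σ2 n : ℝ) (hlam : 0 < lam) (hσ : 0 < σ2) (hn : 0 < n)
    (ρ : ℝ) (hρ : 0 < ρ) :
    deriv (fun ρ : ℝ =>
        (-(lam * ρ + σ2) + Real.sqrt ((lam * ρ + σ2) * ((lam * ρ + σ2) + n * lam * ρ)))
          / (lam * ρ)) ρ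
      = -(σ2 * (2 * (lam * ρ + σ2) + n * ρ * lam
            - 2 * Real.sqrt ((lam * ρ + σ2) * ((lam * ρ + σ2) + n * ρ * lam))))
        / (2 * lam * ρ ^ 2 * Real.sqrt ((lam * ρ + σ2) * ((lam * ρ + σ2) + n * ρ * lam))) ∧
    deriv (fun ρ : ℝ =>
        (-(lam * ρ + σ2) + Real.sqrt ((lam * ρ + σ2) * ((lam * ρ + σ2) + n * lam * ρ)))
          / (lam * ρ)) ρ < 0 := by
  have hκ : 0 < lam * ρ + σ2 := by positivity
  have hm : 0 < n * lam * ρ := by positivity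
  have hq : 0 < (lam * ρ + σ2) * ((lam * ρ + σ2) + n * lam * ρ) := by positivity
  have hderiv := (hasDerivAt_np hlam.ne' hρ.ne' hq).deriv
  have hamgm := two_mul_sqrt_mul_lt_add hκ.le (add_pos hκ hm).le (by linarith)
  change deriv (np lam σ2 n) ρ = _ ∧ deriv (np lam σ2 n) ρ < 0
  rw [hderiv, mul_right_comm n ρ lam]
  refine ⟨rfl, div_neg_of_neg_of_pos ?_ (by positivity)⟩
  have := mul_pos hσ (sub_pos.mpr hamgm)
  linarith
end

section
/- The minimum detection error probability ξ*(ρ) = 1 - γ(n, (n(σ²+ρ)/ρ)ln(1+ρ/σ²))/Γ(n) + γ(n, (nσ²/ρ)ln(1+ρ/σ²))/Γ(n) is strictly decreasing in ρ on (0, ∞). -/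
/-! Put `x = 1 + ρ / σ²`. The two thresholds are `n · x log x / (x - 1)` and
`n · log x / (x - 1)`, i.e. `n` times the secant slopes through `x = 1` of the strictly convex
`x log x` and of the strictly concave `log`; so the first strictly increases and the second
strictly decreases in `ρ`. As `γ(n, ·)` is strictly increasing on `[0, ∞)`, `ξ*` strictly
decreases. -/

/-- The lower incomplete gamma function `γ(s, x) = ∫₀ˣ t^(s-1) e^{-t} dt`. -/
noncomputable def lowerIncGamma (s x : ℝ) : ℝ :=
  ∫ t in (0:ℝ)..x, t ^ (s - 1) * Real.exp (-t)

open Real Set MeasureTheory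

lemma intervalIntegrable_lowerIncGamma_integrand {s : ℝ} (hs : 0 < s) {x : ℝ} (hx : 0 ≤ x) :
    IntervalIntegrable (fun t => t ^ (s - 1) * exp (-t)) volume 0 x := by
  rw [intervalIntegrable_iff_integrableOn_Ioc_of_le hx]
  simpa only [mul_comm] using (GammaIntegral_convergent hs).mono_set Ioc_subset_Ioi_self

lemma lowerIncGamma_strictMonoOn {s : ℝ} (hs : 0 < s) :
    StrictMonoOn (lowerIncGamma s) (Ici 0) := by
  intro x hx y hy hxy
  have h0x := intervalIntegrable_lowerIncGamma_integrand hs hx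
  have h0y := intervalIntegrable_lowerIncGamma_integrand hs hy
  have hdiff : lowerIncGamma s y - lowerIncGamma s x = ∫ t in x..y, t ^ (s - 1) * exp (-t) :=
    intervalIntegral.integral_interval_sub_left h0y h0x
  have hpos : 0 < ∫ t in x..y, t ^ (s - 1) * exp (-t) :=
    intervalIntegral.intervalIntegral_pos_of_pos_on (h0x.symm.trans h0y)
      (fun t ht => by have : 0 < t := lt_of_le_of_lt hx ht.1; positivity) hxy
  linarith

lemma strictAntiOn_log_div_sub_one : StrictAntiOn (fun x => log x / (x - 1)) (Ioi 1) := by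
  intro x hx y hy hxy
  have := strictConcaveOn_log_Ioi.secant_strict_mono (a := 1) (zero_lt_one' ℝ)
    (mem_Ioi.2 (zero_lt_one.trans hx)) (mem_Ioi.2 (zero_lt_one.trans hy)) (ne_of_gt hx)
    (ne_of_gt hy) hxy
  simpa only [log_one, sub_zero] using this

lemma strictMonoOn_mul_log_div_sub_one : StrictMonoOn (fun x => x * log x / (x - 1)) (Ioi 1) := by
  intro x hx y hy hxy
  have := strictConvexOn_mul_log.secant_strict_mono (a := 1) (zero_le_one' ℝ)
    (mem_Ici.2 (zero_le_one.trans hx.le)) (mem_Ici.2 (zero_le_one.trans hy.le)) (ne_of_gt hx)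
    (ne_of_gt hy) hxy
  simpa only [log_one, mul_zero, sub_zero] using this

section
variable {σ2 c : ℝ}

lemma mul_add_div_mul_log_eq (hσ : σ2 ≠ 0) (ρ : ℝ) :
    c * (σ2 + ρ) / ρ * log (1 + ρ / σ2) =
      c * ((1 + ρ / σ2) * log (1 + ρ / σ2) / (1 + ρ / σ2 - 1)) := by
  rw [add_sub_cancel_left]
  field_simp

lemma mul_div_mul_log_eq (hσ : σ2 ≠ 0) (ρ : ℝ) :
    c * σ2 / ρ * log (1 + ρ / σ2) = c * (log (1 + ρ / σ2) / (1 + ρ / σ2 - 1)) := by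
  rw [add_sub_cancel_left]
  field_simp

lemma one_lt_one_add_div (hσ : 0 < σ2) {ρ : ℝ} (hρ : 0 < ρ) : 1 < 1 + ρ / σ2 :=
  lt_add_of_pos_right 1 (div_pos hρ hσ)

lemma strictMonoOn_mul_add_div_mul_log (hc : 0 < c) (hσ : 0 < σ2) :
    StrictMonoOn (fun ρ => c * (σ2 + ρ) / ρ * log (1 + ρ / σ2)) (Ioi 0) := by
  intro ρ₁ (h₁ : 0 < ρ₁) ρ₂ (h₂ : 0 < ρ₂) h
  simp only [mul_add_div_mul_log_eq hσ.ne']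
  exact mul_lt_mul_of_pos_left (strictMonoOn_mul_log_div_sub_one
    (one_lt_one_add_div hσ h₁) (one_lt_one_add_div hσ h₂) (by gcongr)) hc

lemma strictAntiOn_mul_div_mul_log (hc : 0 < c) (hσ : 0 < σ2) :
    StrictAntiOn (fun ρ => c * σ2 / ρ * log (1 + ρ / σ2)) (Ioi 0) := by
  intro ρ₁ (h₁ : 0 < ρ₁) ρ₂ (h₂ : 0 < ρ₂) h
  simp only [mul_div_mul_log_eq hσ.ne']
  exact mul_lt_mul_of_pos_left (strictAntiOn_log_div_sub_one
    (one_lt_one_add_div hσ h₁) (one_lt_one_add_div hσ h₂) (by gcongr)) hc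

end

/-- The minimum detection error probability `ξ*(ρ)` is strictly decreasing on `(0,∞)`. -/
theorem stmt_17 (n : ℕ) (hn : 0 < n) (σ2 : ℝ) (hσ : 0 < σ2) :
    StrictAntiOn (fun ρ : ℝ =>
        1 - lowerIncGamma n ((n : ℝ) * (σ2 + ρ) / ρ * Real.log (1 + ρ / σ2)) / Real.Gamma n
          + lowerIncGamma n ((n : ℝ) * σ2 / ρ * Real.log (1 + ρ / σ2)) / Real.Gamma n)
      (Set.Ioi 0) := by
  have hn' : (0 : ℝ) < n := Nat.cast_pos.2 hn
  have hlog (ρ : ℝ) (hρ : 0 < ρ) : 0 ≤ log (1 + ρ / σ2) :=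
    log_nonneg (one_lt_one_add_div hσ hρ).le
  have hupper := (lowerIncGamma_strictMonoOn hn').comp (strictMonoOn_mul_add_div_mul_log hn' hσ)
    fun ρ (hρ : 0 < ρ) => mul_nonneg (by positivity) (hlog ρ hρ)
  have hlower := (lowerIncGamma_strictMonoOn hn').comp_strictAntiOn
    (strictAntiOn_mul_div_mul_log hn' hσ) fun ρ (hρ : 0 < ρ) =>
      mul_nonneg (by positivity) (hlog ρ hρ)
  intro ρ₁ h₁ ρ₂ h₂ h
  have hΓ := Gamma_pos_of_pos hn'
  have hA := div_lt_div_of_pos_right (hupper h₁ h₂ h) hΓ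
  have hB := div_lt_div_of_pos_right (hlower h₁ h₂ h) hΓ
  dsimp only [Function.comp_apply] at *
  linarith
end
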